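/- Let κ > 0 and let v : ℝ × (0,∞) → ℝ be smooth and everywhere positive, satisfying the heat equation ∂_t v(x,t) = κ · ∂_{xx} v(x,t) for all (x,t) ∈ ℝ × (0,∞). Define u(x,t) := −2κ · ∂_x v(x,t) / v(x,t). Then u satisfies the viscous Burgers equation ∂_t u + u · ∂_x u = κ · ∂_{xx} u on ℝ × (0,∞). -/

import Mathlib

noncomputable section

/-- The Cole–Hopf transform `u = -2κ·v_x/v` of a positive solution `v` of the heat equation. -/
def coleHopf (κ : ℝ) (v : ℝ → ℝ → ℝ) : ℝ → ℝ → ℝ :=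
  fun x t => -(2 * κ) * deriv (fun y => v y t) x / v x t

/-- First partial derivative in the first variable. -/
def pdx (F : ℝ × ℝ → ℝ) : ℝ × ℝ → ℝ := fun p => fderiv ℝ F p (1, 0)

/-- First partial derivative in the second variable. -/
def pdt (F : ℝ × ℝ → ℝ) : ℝ × ℝ → ℝ := fun p => fderiv ℝ F p (0, 1)

lemma diffAt_of_contDiffOn {G : ℝ × ℝ → ℝ} {s : Set (ℝ × ℝ)} (hs : IsOpen s)
    (h : ContDiffOn ℝ (⊤ : ℕ∞) G s) {p : ℝ × ℝ} (hp : p ∈ s) : DifferentiableAt ℝ G p :=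
  (h.contDiffAt (hs.mem_nhds hp)).differentiableAt (by simp)

lemma contDiffOn_fderiv_apply {G : ℝ × ℝ → ℝ} {s : Set (ℝ × ℝ)} (hs : IsOpen s)
    (h : ContDiffOn ℝ (⊤ : ℕ∞) G s) (w : ℝ × ℝ) :
    ContDiffOn ℝ (⊤ : ℕ∞) (fun p => fderiv ℝ G p w) s := by
  have h' : ContDiffOn ℝ (⊤ : ℕ∞) (fun p => fderiv ℝ G p) s :=
    h.fderiv_of_isOpen hs (le_of_eq rfl)
  exact h'.clm_apply contDiffOn_const

lemma contDiffOn_pdx {G : ℝ × ℝ → ℝ} {s : Set (ℝ × ℝ)} (hs : IsOpen s)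
    (h : ContDiffOn ℝ (⊤ : ℕ∞) G s) : ContDiffOn ℝ (⊤ : ℕ∞) (pdx G) s :=
  contDiffOn_fderiv_apply hs h _

lemma contDiffOn_pdt {G : ℝ × ℝ → ℝ} {s : Set (ℝ × ℝ)} (hs : IsOpen s)
    (h : ContDiffOn ℝ (⊤ : ℕ∞) G s) : ContDiffOn ℝ (⊤ : ℕ∞) (pdt G) s :=
  contDiffOn_fderiv_apply hs h _

lemma sliceX {G : ℝ × ℝ → ℝ} {x t : ℝ} (h : DifferentiableAt ℝ G (x, t)) :
    HasDerivAt (fun y => G (y, t)) (pdx G (x, t)) x := by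
  have h1 : HasDerivAt (fun y : ℝ => (y, t)) ((1 : ℝ), (0 : ℝ)) x :=
    (hasDerivAt_id x).prodMk (hasDerivAt_const x t)
  exact h.hasFDerivAt.comp_hasDerivAt x h1

lemma sliceT {G : ℝ × ℝ → ℝ} {x t : ℝ} (h : DifferentiableAt ℝ G (x, t)) :
    HasDerivAt (fun s => G (x, s)) (pdt G (x, t)) t := by
  have h1 : HasDerivAt (fun s : ℝ => (x, s)) ((0 : ℝ), (1 : ℝ)) t :=
    (hasDerivAt_const t x).prodMk (hasDerivAt_id t)
  exact h.hasFDerivAt.comp_hasDerivAt t h1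

lemma mixed_symm {G : ℝ × ℝ → ℝ} {s : Set (ℝ × ℝ)} (hs : IsOpen s)
    (h : ContDiffOn ℝ (⊤ : ℕ∞) G s) {p : ℝ × ℝ} (hp : p ∈ s) :
    pdt (pdx G) p = pdx (pdt G) p := by
  have hA : ContDiffOn ℝ (⊤ : ℕ∞) (fun q => fderiv ℝ G q) s :=
    h.fderiv_of_isOpen hs (le_of_eq rfl)
  have hAd : DifferentiableAt ℝ (fun q => fderiv ℝ G q) p :=
    (hA.contDiffAt (hs.mem_nhds hp)).differentiableAt (by simp)
  have hev : ∀ᶠ q in nhds p, HasFDerivAt G (fderiv ℝ G q) q := by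
    filter_upwards [hs.mem_nhds hp] with q hq
    exact (diffAt_of_contDiffOn hs h hq).hasFDerivAt
  have hsymm := second_derivative_symmetric_of_eventually hev hAd.hasFDerivAt
    ((1 : ℝ), (0 : ℝ)) ((0 : ℝ), (1 : ℝ))
  have h1 : HasFDerivAt (pdx G)
      ((ContinuousLinearMap.apply ℝ ℝ ((1 : ℝ), (0 : ℝ))).comp
        (fderiv ℝ (fun q => fderiv ℝ G q) p)) p :=
    (ContinuousLinearMap.apply ℝ ℝ ((1 : ℝ), (0 : ℝ))).hasFDerivAt.comp p hAd.hasFDerivAt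
  have h2 : HasFDerivAt (pdt G)
      ((ContinuousLinearMap.apply ℝ ℝ ((0 : ℝ), (1 : ℝ))).comp
        (fderiv ℝ (fun q => fderiv ℝ G q) p)) p :=
    (ContinuousLinearMap.apply ℝ ℝ ((0 : ℝ), (1 : ℝ))).hasFDerivAt.comp p hAd.hasFDerivAt
  have e1 : pdt (pdx G) p = fderiv ℝ (fun q => fderiv ℝ G q) p (0, 1) (1, 0) := by
    show fderiv ℝ (pdx G) p (0, 1) = _
    rw [h1.fderiv]; rfl
  have e2 : pdx (pdt G) p = fderiv ℝ (fun q => fderiv ℝ G q) p (1, 0) (0, 1) := by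
    show fderiv ℝ (pdt G) p (1, 0) = _
    rw [h2.fderiv]; rfl
  rw [e1, e2, hsymm]

/-- **Cole–Hopf transformation.** If `v : ℝ × (0,∞) → ℝ` is smooth, everywhere positive and
solves the heat equation `v_t = κ·v_xx`, then `u := -2κ·v_x/v` solves the viscous Burgers
equation `u_t + u·u_x = κ·u_xx` on `ℝ × (0,∞)`. -/
theorem statement15 (κ : ℝ) (hκ : 0 < κ) (v : ℝ → ℝ → ℝ)
    (hsmooth : ContDiffOn ℝ (⊤ : ℕ∞) (fun q : ℝ × ℝ => v q.1 q.2)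
      (Set.univ ×ˢ Set.Ioi (0 : ℝ)))
    (hpos : ∀ x t, 0 < t → 0 < v x t)
    (hheat : ∀ x t, 0 < t →
      deriv (fun s => v x s) t = κ * deriv (deriv fun y => v y t) x) :
    ∀ x t, 0 < t →
      deriv (fun s => coleHopf κ v x s) t +
          coleHopf κ v x t * deriv (fun y => coleHopf κ v y t) x =
        κ * deriv (deriv fun y => coleHopf κ v y t) x := by
  intro x t ht
  set s : Set (ℝ × ℝ) := Set.univ ×ˢ Set.Ioi (0 : ℝ) with hs_def
  have hs : IsOpen s := isOpen_univ.prod isOpen_Ioi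
  set F : ℝ × ℝ → ℝ := fun q => v q.1 q.2 with hF_def
  have hmem : ∀ (a b : ℝ), 0 < b → (a, b) ∈ s := fun a b hb => ⟨trivial, hb⟩
  have hFs : ContDiffOn ℝ (⊤ : ℕ∞) F s := hsmooth
  have hpx : ContDiffOn ℝ (⊤ : ℕ∞) (pdx F) s := contDiffOn_pdx hs hFs
  have hpxx : ContDiffOn ℝ (⊤ : ℕ∞) (pdx (pdx F)) s := contDiffOn_pdx hs hpx
  have hpt : ContDiffOn ℝ (⊤ : ℕ∞) (pdt F) s := contDiffOn_pdt hs hFs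
  -- slice derivatives in x
  have Hv : ∀ x' t', 0 < t' → HasDerivAt (fun y => v y t') (pdx F (x', t')) x' :=
    fun x' t' h' => sliceX (diffAt_of_contDiffOn hs hFs (hmem x' t' h'))
  have Ha : ∀ x' t', 0 < t' → HasDerivAt (fun y => pdx F (y, t')) (pdx (pdx F) (x', t')) x' :=
    fun x' t' h' => sliceX (diffAt_of_contDiffOn hs hpx (hmem x' t' h'))
  have Hc : ∀ x' t', 0 < t' →
      HasDerivAt (fun y => pdx (pdx F) (y, t')) (pdx (pdx (pdx F)) (x', t')) x' :=
    fun x' t' h' => sliceX (diffAt_of_contDiffOn hs hpxx (hmem x' t' h'))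
  have Hbt : ∀ x' t', 0 < t' → HasDerivAt (fun y => pdt F (y, t')) (pdx (pdt F) (x', t')) x' :=
    fun x' t' h' => sliceX (diffAt_of_contDiffOn hs hpt (hmem x' t' h'))
  -- slice derivatives in t
  have Hvt : ∀ x' t', 0 < t' → HasDerivAt (fun u => v x' u) (pdt F (x', t')) t' :=
    fun x' t' h' => sliceT (diffAt_of_contDiffOn hs hFs (hmem x' t' h'))
  have Hat : ∀ x' t', 0 < t' → HasDerivAt (fun u => pdx F (x', u)) (pdt (pdx F) (x', t')) t' :=
    fun x' t' h' => sliceT (diffAt_of_contDiffOn hs hpx (hmem x' t' h'))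
  -- deriv identities
  have hvx : ∀ x' t', 0 < t' → deriv (fun y => v y t') x' = pdx F (x', t') :=
    fun x' t' h' => (Hv x' t' h').deriv
  have hvxx : ∀ x' t', 0 < t' → deriv (deriv fun y => v y t') x' = pdx (pdx F) (x', t') := by
    intro x' t' h'
    have he : deriv (fun y => v y t') = fun y => pdx F (y, t') :=
      funext fun y => hvx y t' h'
    rw [he]
    exact (Ha x' t' h').deriv
  -- the heat equation, in terms of partials
  have hheat' : ∀ x' t', 0 < t' → pdt F (x', t') = κ * pdx (pdx F) (x', t') := by
    intro x' t' h'
    rw [← (Hvt x' t' h').deriv, ← hvxx x' t' h']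
    exact hheat x' t' h'
  -- differentiate the heat equation in x, and use symmetry of mixed partials
  have hmixed : pdt (pdx F) (x, t) = κ * pdx (pdx (pdx F)) (x, t) := by
    have h1 : HasDerivAt (fun y => pdt F (y, t)) (pdx (pdt F) (x, t)) x := Hbt x t ht
    have h3 : HasDerivAt (fun y => κ * pdx (pdx F) (y, t)) (κ * pdx (pdx (pdx F)) (x, t)) x :=
      (Hc x t ht).const_mul κ
    have h2 : HasDerivAt (fun y => pdt F (y, t)) (κ * pdx (pdx (pdx F)) (x, t)) x := by
      apply h3.congr_of_eventuallyEq
      exact Filter.Eventually.of_forall fun y => hheat' y t ht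
    rw [mixed_symm hs hFs (hmem x t ht)]
    exact h1.unique h2
  have hVne : v x t ≠ 0 := (hpos x t ht).ne'
  -- the Cole–Hopf function in slice form
  have hcole : ∀ t', 0 < t' →
      (fun y => coleHopf κ v y t') = fun y => -(2 * κ) * pdx F (y, t') / v y t' := by
    intro t' h'
    funext y
    simp only [coleHopf]
    rw [hvx y t' h']
  -- first x-derivative of u
  have Hu : ∀ x', HasDerivAt (fun y => -(2 * κ) * pdx F (y, t) / v y t)
      ((-(2 * κ) * pdx (pdx F) (x', t) * v x' t -
        -(2 * κ) * pdx F (x', t) * pdx F (x', t)) / v x' t ^ 2) x' :=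
    fun x' => ((Ha x' t ht).const_mul (-(2 * κ))).div (Hv x' t ht) (hpos x' t ht).ne'
  have Hcx : ∀ x', HasDerivAt (fun y => coleHopf κ v y t)
      ((-(2 * κ) * pdx (pdx F) (x', t) * v x' t -
        -(2 * κ) * pdx F (x', t) * pdx F (x', t)) / v x' t ^ 2) x' := by
    intro x'
    rw [hcole t ht]
    exact Hu x'
  have hux_deriv : deriv (fun y => coleHopf κ v y t) = fun x' =>
      (-(2 * κ) * pdx (pdx F) (x', t) * v x' t -
        -(2 * κ) * pdx F (x', t) * pdx F (x', t)) / v x' t ^ 2 :=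
    funext fun x' => (Hcx x').deriv
  -- second x-derivative of u
  have hden : HasDerivAt (fun y => v y t ^ 2) (2 * v x t * pdx F (x, t)) x := by
    have h1 : HasDerivAt (fun y => v y t * v y t)
        (pdx F (x, t) * v x t + v x t * pdx F (x, t)) x := (Hv x t ht).mul (Hv x t ht)
    have he : (fun y => v y t ^ 2) = fun y => v y t * v y t :=
      funext fun y => sq (v y t)
    rw [he]
    convert h1 using 1
    ring
  have num1 : HasDerivAt (fun y => -(2 * κ) * pdx (pdx F) (y, t) * v y t)
      (-(2 * κ) * pdx (pdx (pdx F)) (x, t) * v x t +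
        -(2 * κ) * pdx (pdx F) (x, t) * pdx F (x, t)) x :=
    ((Hc x t ht).const_mul (-(2 * κ))).mul (Hv x t ht)
  have num2 : HasDerivAt (fun y => -(2 * κ) * pdx F (y, t) * pdx F (y, t))
      (-(2 * κ) * pdx (pdx F) (x, t) * pdx F (x, t) +
        -(2 * κ) * pdx F (x, t) * pdx (pdx F) (x, t)) x :=
    ((Ha x t ht).const_mul (-(2 * κ))).mul (Ha x t ht)
  have HBIG : HasDerivAt (fun x' =>
      (-(2 * κ) * pdx (pdx F) (x', t) * v x' t -
        -(2 * κ) * pdx F (x', t) * pdx F (x', t)) / v x' t ^ 2)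
      (((-(2 * κ) * pdx (pdx (pdx F)) (x, t) * v x t +
          -(2 * κ) * pdx (pdx F) (x, t) * pdx F (x, t) -
          (-(2 * κ) * pdx (pdx F) (x, t) * pdx F (x, t) +
            -(2 * κ) * pdx F (x, t) * pdx (pdx F) (x, t))) * v x t ^ 2 -
        (-(2 * κ) * pdx (pdx F) (x, t) * v x t -
          -(2 * κ) * pdx F (x, t) * pdx F (x, t)) * (2 * v x t * pdx F (x, t))) /
        (v x t ^ 2) ^ 2) x :=
    (num1.sub num2).div hden (pow_ne_zero 2 hVne)
  -- t-derivative of u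
  have Hut0 : HasDerivAt (fun u => -(2 * κ) * pdx F (x, u) / v x u)
      ((-(2 * κ) * pdt (pdx F) (x, t) * v x t -
        -(2 * κ) * pdx F (x, t) * pdt F (x, t)) / v x t ^ 2) t :=
    ((Hat x t ht).const_mul (-(2 * κ))).div (Hvt x t ht) hVne
  have Hut : HasDerivAt (fun u => coleHopf κ v x u)
      ((-(2 * κ) * pdt (pdx F) (x, t) * v x t -
        -(2 * κ) * pdx F (x, t) * pdt F (x, t)) / v x t ^ 2) t := by
    apply Hut0.congr_of_eventuallyEq
    filter_upwards [isOpen_Ioi.mem_nhds ht] with u hu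
    simp only [coleHopf]
    rw [hvx x u hu]
  have hcolept : coleHopf κ v x t = -(2 * κ) * pdx F (x, t) / v x t := by
    simp only [coleHopf]
    rw [hvx x t ht]
  rw [Hut.deriv, hcolept, hux_deriv, HBIG.deriv]
  rw [hheat' x t ht, hmixed]
  field_simp
  ring
end
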